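/- Let γ be a proper player-1 selector, let v = ⟨1⟩val^{γ̄}(Reach(T)), let I = {s ∈ S ∖ (T ∪ W₂) | Pre₁(v)(s) > v(s)}, and let γ' be a player-1 selector that agrees with γ at all states not in I and satisfies Pre_{1:γ'}(v)(s) = Pre₁(v)(s) > v(s) for all s ∈ I. Then γ' is also proper. -/

import Mathlib

open scoped Classical

/-- A (two-player) concurrent game structure: a finite state space `S`, a finite
set `M` of moves, move assignments `Γ₁ Γ₂ : S → Finset M`, and a probabilistic
transition function `δ`. -/
structure CGame (S : Type) (M : Type) where
  Γ₁ : S → Finset M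
  Γ₂ : S → Finset M
  δ : S → M → M → S → ℝ

namespace CGame

variable {S M : Type} [Fintype S] [DecidableEq S] [Fintype M] [DecidableEq M]

/-- Well-formedness of a concurrent game structure: move sets are nonempty and
`δ s a b` is a probability distribution over states. -/
def IsGame (G : CGame S M) : Prop :=
  (∀ s, (G.Γ₁ s).Nonempty) ∧ (∀ s, (G.Γ₂ s).Nonempty) ∧
    (∀ s a b t, 0 ≤ G.δ s a b t) ∧ (∀ s a b, (∑ t, G.δ s a b t) = 1)

/-- `x : M → ℝ` is a probability distribution supported on `A`. -/
def IsDistOn (A : Finset M) (x : M → ℝ) : Prop :=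
  (∀ a, 0 ≤ x a) ∧ (∀ a, x a ≠ 0 → a ∈ A) ∧ (∑ a, x a) = 1

/-- A selector for player 1. -/
def IsSel1 (G : CGame S M) (ξ : S → M → ℝ) : Prop := ∀ s, IsDistOn (G.Γ₁ s) (ξ s)

/-- A selector for player 2. -/
def IsSel2 (G : CGame S M) (ξ : S → M → ℝ) : Prop := ∀ s, IsDistOn (G.Γ₂ s) (ξ s)

/-- A strategy for player 1: maps a history (past states `w` and current state `s`)
to a distribution over the moves available at `s`. -/
def IsStrat1 (G : CGame S M) (σ : List S → S → M → ℝ) : Prop :=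
  ∀ w s, IsDistOn (G.Γ₁ s) (σ w s)

/-- A strategy for player 2. -/
def IsStrat2 (G : CGame S M) (σ : List S → S → M → ℝ) : Prop :=
  ∀ w s, IsDistOn (G.Γ₂ s) (σ w s)

/-- The memoryless strategy induced by a selector. -/
def ml (ξ : S → M → ℝ) : List S → S → M → ℝ := fun _ s => ξ s

/-- The pure (Dirac) distribution on a move `b`. -/
def pureDist (b : M) : M → ℝ := fun b' => if b' = b then 1 else 0

/-- The player-1 selector choosing all available moves uniformly at random. -/
noncomputable def uniformSel (G : CGame S M) : S → M → ℝ :=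
  fun s a => if a ∈ G.Γ₁ s then (1 : ℝ) / (G.Γ₁ s).card else 0

/-- Probability of reaching `T` within `n` steps, starting from history `w`
and current state `s`, under strategies `σ₁, σ₂`. -/
noncomputable def reachW (G : CGame S M) (σ₁ σ₂ : List S → S → M → ℝ) (T : Set S) :
    ℕ → List S → S → ℝ
  | 0, _, s => if s ∈ T then 1 else 0
  | n + 1, w, s =>
      if s ∈ T then 1
      else ∑ a : M, ∑ b : M, ∑ t : S,
        σ₁ w s a * σ₂ w s b * G.δ s a b t * reachW G σ₁ σ₂ T n (w ++ [s]) t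

/-- Probability of staying in `F` for `n` steps, starting from history `w`
and current state `s`, under strategies `σ₁, σ₂`. -/
noncomputable def safeW (G : CGame S M) (σ₁ σ₂ : List S → S → M → ℝ) (F : Set S) :
    ℕ → List S → S → ℝ
  | 0, _, s => if s ∈ F then 1 else 0
  | n + 1, w, s =>
      if s ∈ F then
        ∑ a : M, ∑ b : M, ∑ t : S,
          σ₁ w s a * σ₂ w s b * G.δ s a b t * safeW G σ₁ σ₂ F n (w ++ [s]) t
      else 0

/-- `Pr_s^{σ₁,σ₂}(Reach T)`: probability of eventually reaching `T` from `s`. -/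
noncomputable def prReach (G : CGame S M) (σ₁ σ₂ : List S → S → M → ℝ) (T : Set S)
    (s : S) : ℝ :=
  ⨆ n : ℕ, reachW G σ₁ σ₂ T n [] s

/-- `Pr_s^{σ₁,σ₂}(Safe F)`: probability that the play stays in `F` forever. -/
noncomputable def prSafe (G : CGame S M) (σ₁ σ₂ : List S → S → M → ℝ) (F : Set S)
    (s : S) : ℝ :=
  ⨅ n : ℕ, safeW G σ₁ σ₂ F n [] s

/-- `⟨1⟩val^{σ₁}(Reach T)(s) = inf_{σ₂} Pr_s^{σ₁,σ₂}(Reach T)`. -/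
noncomputable def valReachUnder (G : CGame S M) (σ₁ : List S → S → M → ℝ) (T : Set S)
    (s : S) : ℝ :=
  ⨅ σ₂ : {σ // IsStrat2 G σ}, prReach G σ₁ σ₂.1 T s

/-- `⟨1⟩val(Reach T)(s) = sup_{σ₁} inf_{σ₂} Pr_s^{σ₁,σ₂}(Reach T)`. -/
noncomputable def valReach (G : CGame S M) (T : Set S) (s : S) : ℝ :=
  ⨆ σ₁ : {σ // IsStrat1 G σ}, valReachUnder G σ₁.1 T s

/-- `⟨1⟩val^{σ₁}(Safe F)(s) = inf_{σ₂} Pr_s^{σ₁,σ₂}(Safe F)`. -/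
noncomputable def valSafeUnder (G : CGame S M) (σ₁ : List S → S → M → ℝ) (F : Set S)
    (s : S) : ℝ :=
  ⨅ σ₂ : {σ // IsStrat2 G σ}, prSafe G σ₁ σ₂.1 F s

/-- `⟨1⟩val(Safe F)(s) = sup_{σ₁} inf_{σ₂} Pr_s^{σ₁,σ₂}(Safe F)`. -/
noncomputable def valSafe (G : CGame S M) (F : Set S) (s : S) : ℝ :=
  ⨆ σ₁ : {σ // IsStrat1 G σ}, valSafeUnder G σ₁.1 F s

/-- `W₂ = {s | ⟨1⟩val(Reach T)(s) = 0}`. -/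
noncomputable def W2 (G : CGame S M) (T : Set S) : Set S := {s | valReach G T s = 0}

/-- `W₁ = {s | ⟨1⟩val(Safe F)(s) = 1}`. -/
noncomputable def W1 (G : CGame S M) (F : Set S) : Set S := {s | valSafe G F s = 1}

/-- A state is absorbing if for all moves the successor is the state itself. -/
def Absorbing (G : CGame S M) (s : S) : Prop := ∀ a b, G.δ s a b s = 1

/-- A player-1 strategy is proper if against every player-2 strategy, from every
state the set `T ∪ W₂` is reached with probability 1. -/
noncomputable def Proper (G : CGame S M) (T : Set S) (σ₁ : List S → S → M → ℝ) : Prop :=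
  ∀ σ₂, IsStrat2 G σ₂ → ∀ s, prReach G σ₁ σ₂ (T ∪ W2 G T) s = 1

/-- `Pre_{ξ₁,ξ₂}(v)(s)`: one-step expectation of `v` at `s` when the players use the
one-state selectors `x, y`. -/
noncomputable def preSS (G : CGame S M) (v : S → ℝ) (s : S) (x y : M → ℝ) : ℝ :=
  ∑ a : M, ∑ b : M, ∑ t : S, v t * G.δ s a b t * x a * y b

/-- `Pre_{1:ξ₁}(v)(s) = inf_{ξ₂} Pre_{ξ₁,ξ₂}(v)(s)`. -/
noncomputable def pre1Sel (G : CGame S M) (v : S → ℝ) (s : S) (x : M → ℝ) : ℝ :=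
  ⨅ y : {y : M → ℝ // IsDistOn (G.Γ₂ s) y}, preSS G v s x y.1

/-- `Pre₁(v)(s) = sup_{ξ₁} inf_{ξ₂} Pre_{ξ₁,ξ₂}(v)(s)`. -/
noncomputable def pre1 (G : CGame S M) (v : S → ℝ) (s : S) : ℝ :=
  ⨆ x : {x : M → ℝ // IsDistOn (G.Γ₁ s) x}, pre1Sel G v s x.1

/-- The value-iteration sequence: `u 0 = [T]`, `u (k+1) = Pre₁ (u k)`. -/
noncomputable def valIter (G : CGame S M) (T : Set S) : ℕ → S → ℝ
  | 0 => fun s => if s ∈ T then 1 else 0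
  | n + 1 => fun s => pre1 G (valIter G T n) s

/-- The entry time `ℓ_k(s) = min {j ≤ k | u_j(s) = u_k(s)}`. -/
noncomputable def entryTime (G : CGame S M) (T : Set S) (k : ℕ) (s : S) : ℕ :=
  sInf {j : ℕ | valIter G T j s = valIter G T k s}

/-- `dest(s,b)` under a player-1 selector `η`: possible successors of `s` when
player 1 plays `η` and player 2 plays `b`. -/
def destSet (G : CGame S M) (η : S → M → ℝ) (s : S) (b : M) : Set S :=
  {t | ∃ a, η s a ≠ 0 ∧ G.δ s a b t ≠ 0}

/-- `OptSel(v,s)`: the set of optimal one-state player-1 selectors for `v` at `s`. -/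
noncomputable def OptSel (G : CGame S M) (v : S → ℝ) (s : S) : Set (M → ℝ) :=
  {x | IsDistOn (G.Γ₁ s) x ∧ pre1Sel G v s x = pre1 G v s}

/-- `CountOpt(v,s,x)`: the set of counter-optimal player-2 moves against `x`. -/
noncomputable def countOpt (G : CGame S M) (v : S → ℝ) (s : S) (x : M → ℝ) : Finset M :=
  (G.Γ₂ s).filter fun b => preSS G v s x (pureDist b) = pre1 G v s

/-- The support of a one-state selector, as a `Finset`. -/
noncomputable def fsupp (x : M → ℝ) : Finset M := Finset.univ.filter fun a => x a ≠ 0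

/-- `OptSelCount(v,s)`: pairs `(A,B)` such that some optimal selector has support `A`
and counter-optimal action set `B`. -/
noncomputable def optSelCount (G : CGame S M) (v : S → ℝ) (s : S) :
    Set (Finset M × Finset M) :=
  {p | ∃ x ∈ OptSel G v s, fsupp x = p.1 ∧ countOpt G v s x = p.2}

/-- A selector is `k`-uniform if every probability it assigns is of the form `i/j`
with `0 ≤ i ≤ j ≤ k`. -/
def KUniform (k : ℕ) (ξ : S → M → ℝ) : Prop :=
  ∀ s a, ∃ i j : ℕ, i ≤ j ∧ j ≤ k ∧ ξ s a = (i : ℝ) / (j : ℝ)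

end CGame

/-!
Write `U = T ∪ W₂`. Outside `I` the two selectors agree and `v ≤ Pre_{γ,y}(v)` for every
player-2 distribution `y` (player 2 may play `y` and then counter optimally), while on `I`,
`Pre_{γ',y}(v) ≥ Pre₁(v) ≥ v + ε` for a uniform `ε > 0`. So under `γ'` and any player-2
strategy, `(1 - v) / ε` is a nonnegative supermartingale until `U` is reached that drops by `1` at
each visit to `I`: the expected number of visits to `I` is finite. Between visits `γ'` plays like
`γ`, and properness of `γ`, made uniform over all player-2 strategies by backward induction on
player 2's optimal safety probabilities against `γ`, makes long stretches outside `U ∪ I`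
unlikely. Hence the play avoids `U` forever with probability `0`.
-/

open Filter Topology

lemma exists_pos_forall_le_of_finite {ι : Type*} [Finite ι] {p : ι → Prop} {g : ι → ℝ}
    (h : ∀ i, p i → 0 < g i) : ∃ ε > 0, ∀ i, p i → ε ≤ g i := by
  have hev : ∀ᶠ ε in 𝓝[>] (0 : ℝ), ∀ i, p i → ε ≤ g i := by
    refine eventually_all.2 fun i => ?_
    by_cases hi : p i
    · exact (eventually_le_nhds (h i hi)).filter_mono nhdsWithin_le_nhds |>.mono fun _ hε _ => hε
    · exact .of_forall fun _ h' => absurd h' hi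
  obtain ⟨ε, hεg, hε⟩ := (hev.and self_mem_nhdsWithin).exists
  exact ⟨ε, hε, hεg⟩

namespace CGame

variable {S M : Type} [Fintype M] {G : CGame S M}

lemma isDistOn_pureDist {A : Finset M} {b : M} (hb : b ∈ A) : IsDistOn A (pureDist b) := by
  refine ⟨fun a => ?_, fun a ha => ?_, by simp [pureDist]⟩
  · unfold pureDist; split_ifs <;> norm_num
  · simp only [pureDist, ne_eq, ite_eq_right_iff, one_ne_zero, imp_false, not_not] at ha
    exact ha ▸ hb

lemma isStrat1_ml {γ : S → M → ℝ} (hγ : IsSel1 G γ) : IsStrat1 G (ml γ) :=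
  fun _ => hγ

/-- From `s`, play `y` in the first round; once the play has moved to `t`, continue as `c t`
with the first state forgotten. -/
noncomputable def splice (s : S) (y : M → ℝ) (c : S → List S → S → M → ℝ) :
    List S → S → M → ℝ
  | [], s' => if s' = s then y else c s' [] s'
  | _ :: w, s' => c (w.headD s') w s'

lemma isStrat2_splice {s : S} {y : M → ℝ} (hy : IsDistOn (G.Γ₂ s) y)
    {c : S → List S → S → M → ℝ} (hc : ∀ t, IsStrat2 G (c t)) :
    IsStrat2 G (splice s y c) := by
  rintro (_ | ⟨_, w⟩) s'
  · simp only [splice]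
    split_ifs with h
    · exact h ▸ hy
    · exact hc s' [] s'
  · exact hc _ w s'

variable [Fintype S]

lemma nonempty_isStrat2 (hG : G.IsGame) : Nonempty {σ // IsStrat2 G σ} :=
  ⟨⟨fun _ s => pureDist (hG.2.1 s).choose, fun _ s => isDistOn_pureDist (hG.2.1 s).choose_spec⟩⟩

section Pre

variable {s : S} {x y : M → ℝ} {f g : S → ℝ}

lemma sum_mul_eq_preSS :
    ∑ a, ∑ b, ∑ t, x a * y b * G.δ s a b t * f t = preSS G f s x y :=
  Finset.sum_congr rfl fun _ _ => Finset.sum_congr rfl fun _ _ =>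
    Finset.sum_congr rfl fun _ _ => by ring

lemma preSS_add : preSS G (f + g) s x y = preSS G f s x y + preSS G g s x y := by
  simp only [preSS, Pi.add_apply, add_mul, Finset.sum_add_distrib]

lemma preSS_sub : preSS G (f - g) s x y = preSS G f s x y - preSS G g s x y := by
  simp only [preSS, Pi.sub_apply, sub_mul, Finset.sum_sub_distrib]

lemma preSS_smul (c : ℝ) : preSS G (c • f) s x y = c * preSS G f s x y := by
  simp only [preSS, Pi.smul_apply, smul_eq_mul, Finset.mul_sum, mul_assoc]

lemma preSS_const (hG : G.IsGame) (hx : IsDistOn (G.Γ₁ s) x) (hy : IsDistOn (G.Γ₂ s) y)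
    (c : ℝ) : preSS G (fun _ => c) s x y = c := by
  simp only [preSS, ← Finset.sum_mul, ← Finset.mul_sum, hG.2.2.2, hx.2.2, hy.2.2, mul_one]

lemma preSS_mono (hG : G.IsGame) (hx : ∀ a, 0 ≤ x a) (hy : ∀ b, 0 ≤ y b) (hfg : f ≤ g) :
    preSS G f s x y ≤ preSS G g s x y :=
  Finset.sum_le_sum fun a _ => Finset.sum_le_sum fun b _ => Finset.sum_le_sum fun t _ =>
    mul_le_mul_of_nonneg_right (mul_le_mul_of_nonneg_right
      (mul_le_mul_of_nonneg_right (hfg t) (hG.2.2.1 s a b t)) (hx a)) (hy b)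

lemma preSS_nonneg (hG : G.IsGame) (hx : ∀ a, 0 ≤ x a) (hy : ∀ b, 0 ≤ y b) (hf : 0 ≤ f) :
    0 ≤ preSS G f s x y := by
  simpa [preSS] using preSS_mono hG hx hy hf

lemma preSS_pureDist (b : M) :
    preSS G f s x (pureDist b) = ∑ a, ∑ t, f t * G.δ s a b t * x a := by
  refine Finset.sum_congr rfl fun a _ => ?_
  rw [Finset.sum_eq_single b (fun b' _ hb' => by simp [pureDist, hb']) (by simp)]
  simp [pureDist]

lemma preSS_eq_sum_pureDist : preSS G f s x y = ∑ b, y b * preSS G f s x (pureDist b) := by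
  simp only [preSS_pureDist, Finset.mul_sum]
  rw [Finset.sum_comm]
  exact Finset.sum_congr rfl fun _ _ => Finset.sum_congr rfl fun _ _ =>
    Finset.sum_congr rfl fun _ _ => by ring

lemma pre1Sel_le_preSS (hG : G.IsGame) {v : S → ℝ} (hv : 0 ≤ v) (hx : ∀ a, 0 ≤ x a)
    (hy : IsDistOn (G.Γ₂ s) y) : pre1Sel G v s x ≤ preSS G v s x y :=
  ciInf_le ⟨0, by rintro _ ⟨z, rfl⟩; exact preSS_nonneg hG hx z.2.1 hv⟩
    (⟨y, hy⟩ : {y // IsDistOn (G.Γ₂ s) y})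

end Pre

/-- Expectation of `f` at round `n` over the plays that stay in `F` during rounds `0, …, n - 1`
(and count `0` otherwise). -/
noncomputable def stopExp (G : CGame S M) (σ₁ σ₂ : List S → S → M → ℝ) (F : Set S) :
    ℕ → (List S → S → ℝ) → List S → S → ℝ
  | 0, f, w, s => f w s
  | n + 1, f, w, s =>
      if s ∈ F then preSS G (stopExp G σ₁ σ₂ F n f (w ++ [s])) s (σ₁ w s) (σ₂ w s) else 0

section StopExp

variable {σ₁ σ₂ : List S → S → M → ℝ} {F : Set S}

lemma stopExp_comp (m n : ℕ) (f : List S → S → ℝ) :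
    stopExp G σ₁ σ₂ F (m + n) f = stopExp G σ₁ σ₂ F m (stopExp G σ₁ σ₂ F n f) := by
  induction m with
  | zero => rw [Nat.zero_add]; rfl
  | succ m ih => funext w s; rw [Nat.add_right_comm]; simp only [stopExp, ih]

lemma stopExp_add (n : ℕ) (f g : List S → S → ℝ) :
    stopExp G σ₁ σ₂ F n (f + g) = stopExp G σ₁ σ₂ F n f + stopExp G σ₁ σ₂ F n g := by
  induction n with
  | zero => rfl
  | succ n ih =>
    funext w s
    simp only [stopExp, ih, Pi.add_apply, preSS_add]
    split_ifs <;> simp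

lemma stopExp_mono (hG : G.IsGame) (h1 : IsStrat1 G σ₁) (h2 : IsStrat2 G σ₂)
    {f g : List S → S → ℝ} (hfg : f ≤ g) (n : ℕ) :
    stopExp G σ₁ σ₂ F n f ≤ stopExp G σ₁ σ₂ F n g := by
  induction n with
  | zero => exact hfg
  | succ n ih =>
    intro w s
    simp only [stopExp]
    split_ifs
    exacts [preSS_mono hG (h1 w s).1 (h2 w s).1 (ih _), le_rfl]

lemma stopExp_nonneg (hG : G.IsGame) (h1 : IsStrat1 G σ₁) (h2 : IsStrat2 G σ₂)
    {f : List S → S → ℝ} (hf : 0 ≤ f) (n : ℕ) : 0 ≤ stopExp G σ₁ σ₂ F n f := by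
  induction n with
  | zero => exact hf
  | succ n ih =>
    intro w s
    simp only [stopExp]
    split_ifs
    exacts [preSS_nonneg hG (h1 w s).1 (h2 w s).1 (ih _), le_rfl]

lemma stopExp_le_const (hG : G.IsGame) (h1 : IsStrat1 G σ₁) (h2 : IsStrat2 G σ₂)
    {f : List S → S → ℝ} {c : ℝ} (hc : 0 ≤ c) (hf : ∀ w s, f w s ≤ c) (n : ℕ) (w : List S)
    (s : S) : stopExp G σ₁ σ₂ F n f w s ≤ c := by
  induction n generalizing w s with
  | zero => exact hf w s
  | succ n ih =>
    simp only [stopExp]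
    split_ifs
    · exact (preSS_mono hG (h1 w s).1 (h2 w s).1 (ih _)).trans_eq
        (preSS_const hG (h1 w s) (h2 w s) c)
    · exact hc

lemma safeW_succ (n : ℕ) (w : List S) (s : S) :
    safeW G σ₁ σ₂ F (n + 1) w s =
      if s ∈ F then preSS G (safeW G σ₁ σ₂ F n (w ++ [s])) s (σ₁ w s) (σ₂ w s) else 0 := by
  rw [safeW, sum_mul_eq_preSS]

lemma reachW_succ (T : Set S) (n : ℕ) (w : List S) (s : S) :
    reachW G σ₁ σ₂ T (n + 1) w s =
      if s ∈ T then 1 else preSS G (reachW G σ₁ σ₂ T n (w ++ [s])) s (σ₁ w s) (σ₂ w s) := by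
  rw [reachW, sum_mul_eq_preSS]

lemma safeW_of_notMem {s : S} (hs : s ∉ F) (n : ℕ) (w : List S) :
    safeW G σ₁ σ₂ F n w s = 0 := by
  cases n <;> simp [safeW, hs]

lemma safeW_add (m n : ℕ) :
    safeW G σ₁ σ₂ F (m + n) = stopExp G σ₁ σ₂ F m (safeW G σ₁ σ₂ F n) := by
  induction m with
  | zero => rw [Nat.zero_add]; rfl
  | succ m ih => funext w s; rw [Nat.add_right_comm, safeW_succ]; simp only [stopExp, ih]

lemma safeW_eq_stopExp (n : ℕ) :
    safeW G σ₁ σ₂ F n = stopExp G σ₁ σ₂ F n (safeW G σ₁ σ₂ F 0) :=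
  safeW_add n 0

lemma safeW_nonneg (hG : G.IsGame) (h1 : IsStrat1 G σ₁) (h2 : IsStrat2 G σ₂) (n : ℕ)
    (w : List S) (s : S) : 0 ≤ safeW G σ₁ σ₂ F n w s := by
  rw [safeW_eq_stopExp]
  exact stopExp_nonneg hG h1 h2 (fun w s => by simp only [safeW]; split_ifs <;> norm_num) n w s

lemma safeW_le_one (hG : G.IsGame) (h1 : IsStrat1 G σ₁) (h2 : IsStrat2 G σ₂) (n : ℕ)
    (w : List S) (s : S) : safeW G σ₁ σ₂ F n w s ≤ 1 := by
  rw [safeW_eq_stopExp]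
  exact stopExp_le_const hG h1 h2 zero_le_one
    (fun w s => by simp only [safeW]; split_ifs <;> norm_num) n w s

lemma reachW_add_safeW (hG : G.IsGame) (h1 : IsStrat1 G σ₁) (h2 : IsStrat2 G σ₂) (A : Set S)
    (n : ℕ) (w : List S) (s : S) : reachW G σ₁ σ₂ A n w s + safeW G σ₁ σ₂ Aᶜ n w s = 1 := by
  induction n generalizing w s with
  | zero => by_cases hs : s ∈ A <;> simp [reachW, safeW, hs]
  | succ n ih =>
    rw [reachW_succ, safeW_succ]
    by_cases hs : s ∈ A
    · simp [hs]
    · rw [if_neg hs, if_pos (Set.mem_compl hs), ← preSS_add, show reachW G σ₁ σ₂ A n (w ++ [s]) +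
        safeW G σ₁ σ₂ Aᶜ n (w ++ [s]) = fun _ => 1 from funext (ih _)]
      exact preSS_const hG (h1 w s) (h2 w s) 1

lemma prSafe_le_safeW (hG : G.IsGame) (h1 : IsStrat1 G σ₁) (h2 : IsStrat2 G σ₂) (n : ℕ)
    (s : S) : prSafe G σ₁ σ₂ F s ≤ safeW G σ₁ σ₂ F n [] s :=
  ciInf_le ⟨0, by rintro _ ⟨n, rfl⟩; exact safeW_nonneg hG h1 h2 n [] s⟩ n

lemma prSafe_nonneg (hG : G.IsGame) (h1 : IsStrat1 G σ₁) (h2 : IsStrat2 G σ₂) (s : S) :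
    0 ≤ prSafe G σ₁ σ₂ F s :=
  le_ciInf fun n => safeW_nonneg hG h1 h2 n [] s

lemma reachW_le_prReach (hG : G.IsGame) (h1 : IsStrat1 G σ₁) (h2 : IsStrat2 G σ₂) (A : Set S)
    (n : ℕ) (s : S) : reachW G σ₁ σ₂ A n [] s ≤ prReach G σ₁ σ₂ A s :=
  le_ciSup (f := fun n => reachW G σ₁ σ₂ A n [] s) ⟨1, by
    rintro _ ⟨n, rfl⟩
    dsimp only
    linarith [reachW_add_safeW hG h1 h2 A n [] s, safeW_nonneg hG h1 h2 (F := Aᶜ) n [] s]⟩ n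

lemma prReach_eq_one_sub_prSafe (hG : G.IsGame) (h1 : IsStrat1 G σ₁) (h2 : IsStrat2 G σ₂)
    (A : Set S) (s : S) : prReach G σ₁ σ₂ A s = 1 - prSafe G σ₁ σ₂ Aᶜ s := by
  have hsum := fun n => reachW_add_safeW hG h1 h2 A n [] s
  refine le_antisymm (ciSup_le fun n => ?_) ?_
  · linarith [hsum n, prSafe_le_safeW hG h1 h2 (F := Aᶜ) n s]
  · rw [sub_le_comm]
    exact le_ciInf fun n => by linarith [hsum n, reachW_le_prReach hG h1 h2 A n s]

lemma prReach_nonneg (hG : G.IsGame) (h1 : IsStrat1 G σ₁) (h2 : IsStrat2 G σ₂) (A : Set S)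
    (s : S) : 0 ≤ prReach G σ₁ σ₂ A s := by
  linarith [prReach_eq_one_sub_prSafe hG h1 h2 A s, prSafe_le_safeW hG h1 h2 (F := Aᶜ) 0 s,
    safeW_le_one hG h1 h2 (F := Aᶜ) 0 [] s]

lemma prReach_le_one (hG : G.IsGame) (h1 : IsStrat1 G σ₁) (h2 : IsStrat2 G σ₂) (A : Set S)
    (s : S) : prReach G σ₁ σ₂ A s ≤ 1 := by
  linarith [prReach_eq_one_sub_prSafe hG h1 h2 A s, prSafe_nonneg hG h1 h2 (F := Aᶜ) s]

lemma safeW_le_safeW_of_eqOn {σ₁' : List S → S → M → ℝ} (hG : G.IsGame)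
    (h1' : IsStrat1 G σ₁') (h2 : IsStrat2 G σ₂) {F' : Set S} (hF : F ⊆ F')
    (heq : ∀ w, ∀ s ∈ F, σ₁ w s = σ₁' w s) (n : ℕ) (w : List S) (s : S) :
    safeW G σ₁ σ₂ F n w s ≤ safeW G σ₁' σ₂ F' n w s := by
  by_cases hs : s ∈ F
  · cases n with
    | zero => simp [safeW, hs, hF hs]
    | succ n =>
      rw [safeW_succ, safeW_succ, if_pos hs, if_pos (hF hs), heq w s hs]
      exact preSS_mono hG (h1' w s).1 (h2 w s).1
        fun t => safeW_le_safeW_of_eqOn hG h1' h2 hF heq n _ t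
  · rw [safeW_of_notMem hs]
    exact safeW_nonneg hG h1' h2 n w s

end StopExp

section Value

variable {γ : S → M → ℝ} {T : Set S}

lemma reachW_splice (s : S) (y : M → ℝ) (c : S → List S → S → M → ℝ) (n : ℕ) (w : List S)
    (t : S) :
    reachW G (ml γ) (splice s y c) T n (s :: w) t = reachW G (ml γ) (c (w.headD t)) T n w t := by
  induction n generalizing w t with
  | zero => rfl
  | succ n ih =>
    have hnext : reachW G (ml γ) (splice s y c) T n (s :: w ++ [t]) =
        reachW G (ml γ) (c (w.headD t)) T n (w ++ [t]) := by
      funext u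
      rw [List.cons_append, ih]
      cases w <;> rfl
    rw [reachW_succ, reachW_succ, hnext]
    rfl

lemma valReachUnder_le_prReach {σ₁ σ₂ : List S → S → M → ℝ} (hG : G.IsGame)
    (h1 : IsStrat1 G σ₁) (h2 : IsStrat2 G σ₂) (s : S) :
    valReachUnder G σ₁ T s ≤ prReach G σ₁ σ₂ T s :=
  ciInf_le ⟨0, by rintro _ ⟨σ, rfl⟩; exact prReach_nonneg hG h1 σ.2 T s⟩
    (⟨σ₂, h2⟩ : {σ // IsStrat2 G σ})

lemma valReachUnder_nonneg {σ₁ : List S → S → M → ℝ} (hG : G.IsGame) (h1 : IsStrat1 G σ₁)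
    (s : S) : 0 ≤ valReachUnder G σ₁ T s :=
  have := nonempty_isStrat2 hG
  le_ciInf fun σ => prReach_nonneg hG h1 σ.2 T s

lemma valReachUnder_le_one {σ₁ : List S → S → M → ℝ} (hG : G.IsGame) (h1 : IsStrat1 G σ₁)
    (s : S) : valReachUnder G σ₁ T s ≤ 1 :=
  let ⟨σ⟩ := nonempty_isStrat2 hG
  (valReachUnder_le_prReach hG h1 σ.2 s).trans (prReach_le_one hG h1 σ.2 T s)

/-- Player 2 can play `y` first and then near-optimal counter-strategies from each successor. -/
lemma valReachUnder_le_preSS (hG : G.IsGame) (hγ : IsSel1 G γ) {s : S} (hs : s ∉ T)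
    {y : M → ℝ} (hy : IsDistOn (G.Γ₂ s) y) :
    valReachUnder G (ml γ) T s ≤ preSS G (valReachUnder G (ml γ) T) s (γ s) y := by
  set v := valReachUnder G (ml γ) T
  have h1 := isStrat1_ml hγ
  have := nonempty_isStrat2 hG
  refine le_of_forall_pos_le_add fun η hη => ?_
  have hc : ∀ t, ∃ σ : {σ // IsStrat2 G σ}, prReach G (ml γ) σ.1 T t < v t + η :=
    fun t => exists_lt_of_ciInf_lt (lt_add_of_pos_right (v t) hη)
  choose c hc using hc
  have h2 := isStrat2_splice hy fun t => (c t).2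
  refine (valReachUnder_le_prReach hG h1 h2 s).trans (ciSup_le fun n => ?_)
  cases n with
  | zero =>
    simp only [reachW, hs, if_false]
    exact add_nonneg (preSS_nonneg hG (hγ s).1 hy.1 fun t => valReachUnder_nonneg hG h1 t) hη.le
  | succ n =>
    have hnext : reachW G (ml γ) (splice s y fun t => (c t).1) T n [s] ≤ v + fun _ => η :=
      fun t => (reachW_splice s y _ n [] t).trans_le
        ((reachW_le_prReach hG h1 (c t).2 T n t).trans (hc t).le)
    rw [reachW_succ, if_neg hs, List.nil_append]
    refine (preSS_mono hG (hγ s).1 (h2 [] s).1 hnext).trans_eq ?_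
    rw [preSS_add, preSS_const hG (hγ s) (h2 [] s)]
    simp [splice]

end Value

lemma le_safeW_of_le_preSS {σ₁ σ₂ : List S → S → M → ℝ} {F : Set S} (hG : G.IsGame)
    (h1 : IsStrat1 G σ₁) (h2 : IsStrat2 G σ₂) {f : S → ℝ} (hf1 : ∀ t, f t ≤ 1)
    (hf0 : ∀ t ∉ F, f t ≤ 0) (hf : ∀ w, ∀ t ∈ F, f t ≤ preSS G f t (σ₁ w t) (σ₂ w t))
    (n : ℕ) (w : List S) (s : S) : f s ≤ safeW G σ₁ σ₂ F n w s := by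
  induction n generalizing w s with
  | zero => by_cases hs : s ∈ F <;> simp [safeW, hs, hf1 s, hf0 s]
  | succ n ih =>
    rw [safeW_succ]
    split_ifs with hs
    · exact (hf w s hs).trans (preSS_mono hG (h1 w s).1 (h2 w s).1 (ih _))
    · exact hf0 s hs

/-- Player 2's optimal probability, against `ml γ`, of staying in `F` for `n` rounds. -/
noncomputable def maxSafe (G : CGame S M) (γ : S → M → ℝ) (F : Set S) : ℕ → S → ℝ
  | 0, s => if s ∈ F then 1 else 0
  | n + 1, s => if s ∈ F then ⨆ b : G.Γ₂ s, preSS G (maxSafe G γ F n) s (γ s) (pureDist b) else 0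

section MaxSafe

variable {γ : S → M → ℝ} {F : Set S}

lemma le_maxSafe_succ {n : ℕ} {s : S} (hs : s ∈ F) {b : M} (hb : b ∈ G.Γ₂ s) :
    preSS G (maxSafe G γ F n) s (γ s) (pureDist b) ≤ maxSafe G γ F (n + 1) s := by
  rw [maxSafe, if_pos hs]
  exact le_ciSup (Finite.bddAbove_range fun b : G.Γ₂ s =>
    preSS G (maxSafe G γ F n) s (γ s) (pureDist b)) ⟨b, hb⟩

lemma maxSafe_succ_le (hG : G.IsGame) {n : ℕ} {s : S} (hs : s ∈ F) {c : ℝ}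
    (h : ∀ b ∈ G.Γ₂ s, preSS G (maxSafe G γ F n) s (γ s) (pureDist b) ≤ c) :
    maxSafe G γ F (n + 1) s ≤ c := by
  rw [maxSafe, if_pos hs]
  have := (hG.2.1 s).to_subtype
  exact ciSup_le fun b => h b b.2

lemma safeW_le_maxSafe (hG : G.IsGame) (hγ : IsSel1 G γ) {σ₂ : List S → S → M → ℝ}
    (h2 : IsStrat2 G σ₂) (n : ℕ) (w : List S) (s : S) :
    safeW G (ml γ) σ₂ F n w s ≤ maxSafe G γ F n s := by
  induction n generalizing w s with
  | zero => exact le_rfl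
  | succ n ih =>
    rw [safeW_succ]
    split_ifs with hs
    · calc preSS G (safeW G (ml γ) σ₂ F n (w ++ [s])) s (γ s) (σ₂ w s)
          ≤ preSS G (maxSafe G γ F n) s (γ s) (σ₂ w s) :=
            preSS_mono hG (hγ s).1 (h2 w s).1 (ih _)
        _ = ∑ b, σ₂ w s b * preSS G (maxSafe G γ F n) s (γ s) (pureDist b) :=
            preSS_eq_sum_pureDist
        _ ≤ ∑ b, σ₂ w s b * maxSafe G γ F (n + 1) s := Finset.sum_le_sum fun b _ => by
            by_cases hb : σ₂ w s b = 0
            · simp [hb]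
            · exact mul_le_mul_of_nonneg_left (le_maxSafe_succ hs ((h2 w s).2.1 b hb))
                ((h2 w s).1 b)
        _ = maxSafe G γ F (n + 1) s := by rw [← Finset.sum_mul, (h2 w s).2.2, one_mul]
    · simp [maxSafe, hs]

lemma maxSafe_nonneg (hG : G.IsGame) (hγ : IsSel1 G γ) (n : ℕ) (s : S) :
    0 ≤ maxSafe G γ F n s :=
  let ⟨σ⟩ := nonempty_isStrat2 hG
  (safeW_nonneg hG (isStrat1_ml hγ) σ.2 n [] s).trans (safeW_le_maxSafe hG hγ σ.2 n [] s)

lemma maxSafe_antitone (hG : G.IsGame) (hγ : IsSel1 G γ) (s : S) :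
    Antitone fun n => maxSafe G γ F n s := by
  refine antitone_nat_of_succ_le fun n => ?_
  induction n generalizing s with
  | zero =>
    by_cases hs : s ∈ F
    · refine maxSafe_succ_le hG hs fun b hb => ?_
      rw [maxSafe, if_pos hs, ← preSS_const hG (hγ s) (isDistOn_pureDist hb) 1]
      exact preSS_mono hG (hγ s).1 (isDistOn_pureDist hb).1 fun t => by
        simp only [maxSafe]; split_ifs <;> norm_num
    · simp [maxSafe, hs]
  | succ n ih =>
    by_cases hs : s ∈ F
    · exact maxSafe_succ_le hG hs fun b hb =>
        (preSS_mono hG (hγ s).1 (isDistOn_pureDist hb).1 ih).trans (le_maxSafe_succ hs hb)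
    · simp [maxSafe, hs]

lemma tendsto_maxSafe (hG : G.IsGame) (hγ : IsSel1 G γ) (s : S) :
    Tendsto (fun n => maxSafe G γ F n s) atTop (𝓝 (⨅ n, maxSafe G γ F n s)) :=
  tendsto_atTop_ciInf (maxSafe_antitone hG hγ s)
    ⟨0, by rintro _ ⟨n, rfl⟩; exact maxSafe_nonneg hG hγ n s⟩

lemma iInf_maxSafe_le (hG : G.IsGame) (hγ : IsSel1 G γ) (n : ℕ) (s : S) :
    ⨅ n, maxSafe G γ F n s ≤ maxSafe G γ F n s :=
  ciInf_le ⟨0, by rintro _ ⟨n, rfl⟩; exact maxSafe_nonneg hG hγ n s⟩ n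

/-- Pass to the limit in `maxSafe (n + 1) s = max_b Pre(maxSafe n)(s)`; the convergence is uniform
over the finitely many states. -/
lemma exists_iInf_maxSafe_le_preSS (hG : G.IsGame) (hγ : IsSel1 G γ) {s : S} (hs : s ∈ F) :
    ∃ b ∈ G.Γ₂ s, ⨅ n, maxSafe G γ F n s ≤
      preSS G (fun t => ⨅ n, maxSafe G γ F n t) s (γ s) (pureDist b) := by
  set W := fun t => ⨅ n, maxSafe G γ F n t
  have := (hG.2.1 s).to_subtype
  obtain ⟨b, hb⟩ := exists_eq_ciSup_of_finite (f := fun b : G.Γ₂ s =>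
    preSS G W s (γ s) (pureDist b))
  refine ⟨b, b.2, hb ▸ le_of_forall_pos_le_add fun η hη => ?_⟩
  obtain ⟨n, hn⟩ := (eventually_all.2 fun t => (tendsto_maxSafe hG hγ t).eventually
    (eventually_le_nhds (lt_add_of_pos_right (W t) hη))).exists
  refine (iInf_maxSafe_le hG hγ (n + 1) s).trans (maxSafe_succ_le hG hs fun b' hb' => ?_)
  calc preSS G (maxSafe G γ F n) s (γ s) (pureDist b')
      ≤ preSS G (W + fun _ => η) s (γ s) (pureDist b') :=
        preSS_mono hG (hγ s).1 (isDistOn_pureDist hb').1 hn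
    _ = preSS G W s (γ s) (pureDist b') + η := by
        rw [preSS_add, preSS_const hG (hγ s) (isDistOn_pureDist hb')]
    _ ≤ _ := by
        gcongr
        exact le_ciSup (Finite.bddAbove_range fun b : G.Γ₂ s => preSS G W s (γ s) (pureDist b))
          ⟨b', hb'⟩

/-- The pure memoryless counter-strategy given by `exists_iInf_maxSafe_le_preSS` keeps the play
in `F` with probability at least the limit of `maxSafe`. -/
lemma iInf_maxSafe_eq_zero (hG : G.IsGame) (hγ : IsSel1 G γ)
    (hsafe : ∀ σ₂, IsStrat2 G σ₂ → ∀ s, prSafe G (ml γ) σ₂ F s = 0) (s : S) :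
    ⨅ n, maxSafe G γ F n s = 0 := by
  set W := fun t => ⨅ n, maxSafe G γ F n t
  have hb : ∀ t, ∃ b ∈ G.Γ₂ t, t ∈ F → W t ≤ preSS G W t (γ t) (pureDist b) := fun t => by
    by_cases ht : t ∈ F
    · obtain ⟨b, hb, h⟩ := exists_iInf_maxSafe_le_preSS hG hγ ht
      exact ⟨b, hb, fun _ => h⟩
    · obtain ⟨b, hb⟩ := hG.2.1 t
      exact ⟨b, hb, fun h => absurd h ht⟩
  choose b hbΓ hbW using hb
  have h2 : IsStrat2 G (ml fun t => pureDist (b t)) := fun _ t => isDistOn_pureDist (hbΓ t)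
  have hW0 : ∀ t, W t ≤ maxSafe G γ F 0 t := iInf_maxSafe_le hG hγ 0
  refine le_antisymm ?_ (le_ciInf fun n => maxSafe_nonneg hG hγ n s)
  rw [← hsafe _ h2 s]
  refine le_ciInf fun n => le_safeW_of_le_preSS hG (isStrat1_ml hγ) h2 (fun t => ?_)
    (fun t ht => ?_) (fun _ t ht => hbW t ht) n [] s
  · exact (hW0 t).trans (by simp only [maxSafe]; split_ifs <;> norm_num)
  · simpa [maxSafe, ht] using hW0 t

end MaxSafe

lemma Proper.exists_safeW_le {γ : S → M → ℝ} {T : Set S} (hG : G.IsGame) (hγ : IsSel1 G γ)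
    (hproper : Proper G T (ml γ)) {η : ℝ} (hη : 0 < η) :
    ∃ n, ∀ σ₂, IsStrat2 G σ₂ → ∀ w s, safeW G (ml γ) σ₂ (T ∪ W2 G T)ᶜ n w s ≤ η := by
  have hsafe : ∀ σ₂, IsStrat2 G σ₂ → ∀ s, prSafe G (ml γ) σ₂ (T ∪ W2 G T)ᶜ s = 0 :=
    fun σ₂ h2 s => by
      have h := hproper σ₂ h2 s
      rw [prReach_eq_one_sub_prSafe hG (isStrat1_ml hγ) h2] at h
      linarith
  obtain ⟨n, hn⟩ := (eventually_all.2 fun s => (tendsto_maxSafe hG hγ s).eventually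
    (eventually_le_nhds ((iInf_maxSafe_eq_zero hG hγ hsafe s).symm ▸ hη))).exists
  exact ⟨n, fun σ₂ h2 w s => (safeW_le_maxSafe hG hγ h2 n w s).trans (hn s)⟩

section Potential

variable {σ₁ σ₂ : List S → S → M → ℝ} {U I : Set S} {φ : S → ℝ}

lemma stopExp_le_of_superharmonic (hG : G.IsGame) (h1 : IsStrat1 G σ₁) (h2 : IsStrat2 G σ₂)
    (hφ : ∀ t, 0 ≤ φ t) (hsuper : ∀ w, ∀ s ∉ U, preSS G φ s (σ₁ w s) (σ₂ w s) ≤ φ s) (n : ℕ)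
    (w : List S) (s : S) : stopExp G σ₁ σ₂ Uᶜ n (fun _ => φ) w s ≤ φ s := by
  induction n generalizing w s with
  | zero => exact le_rfl
  | succ n ih =>
    rw [stopExp]
    split_ifs with hs
    · exact (preSS_mono hG (h1 w s).1 (h2 w s).1 (ih _)).trans (hsuper w s hs)
    · exact hφ s

/-- Union bound: a play that stays outside `U` either stays outside `U ∪ I` as well or visits
`I`, and each visit to `I` costs the potential `φ` one unit in expectation. -/
lemma safeW_add_stopExp_le_of_drop (hG : G.IsGame) (h1 : IsStrat1 G σ₁) (h2 : IsStrat2 G σ₂)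
    (hφ : ∀ t, 0 ≤ φ t)
    (hdrop : ∀ w, ∀ s ∉ U, preSS G φ s (σ₁ w s) (σ₂ w s) + I.indicator 1 s ≤ φ s) (L : ℕ) :
    safeW G σ₁ σ₂ Uᶜ L + stopExp G σ₁ σ₂ Uᶜ (L + 1) (fun _ => φ) ≤
      safeW G σ₁ σ₂ (U ∪ I)ᶜ L + fun _ => φ := by
  have hsuper : ∀ w, ∀ s ∉ U, preSS G φ s (σ₁ w s) (σ₂ w s) ≤ φ s := fun w s hs =>
    (le_add_of_nonneg_right (Set.indicator_nonneg (fun _ _ => zero_le_one) s)).trans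
      (hdrop w s hs)
  have hnext : ∀ n w, ∀ s ∉ U,
      stopExp G σ₁ σ₂ Uᶜ (n + 1) (fun _ => φ) w s ≤ preSS G φ s (σ₁ w s) (σ₂ w s) :=
    fun n w s hs => by
      rw [stopExp, if_pos (Set.mem_compl hs)]
      exact preSS_mono hG (h1 w s).1 (h2 w s).1
        (stopExp_le_of_superharmonic hG h1 h2 hφ hsuper n _)
  have hboundary : ∀ L w, ∀ s ∈ U ∪ I, safeW G σ₁ σ₂ Uᶜ L w s +
      stopExp G σ₁ σ₂ Uᶜ (L + 1) (fun _ => φ) w s ≤ safeW G σ₁ σ₂ (U ∪ I)ᶜ L w s + φ s := by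
    intro L w s hs
    have h0 := safeW_nonneg (F := (U ∪ I)ᶜ) hG h1 h2 L w s
    by_cases hU : s ∈ U
    · have hU' : s ∉ Uᶜ := fun h => h hU
      rw [safeW_of_notMem hU', stopExp, if_neg hU']
      linarith [hφ s]
    · have hI : s ∈ I := hs.resolve_left hU
      have := hdrop w s hU
      rw [Set.indicator_of_mem hI, Pi.one_apply] at this
      linarith [safeW_le_one (F := Uᶜ) hG h1 h2 L w s, hnext L w s hU]
  induction L with
  | zero =>
    intro w s
    by_cases hs : s ∈ U ∪ I
    · exact hboundary 0 w s hs
    · simp only [Pi.add_apply, safeW, if_pos (Set.mem_compl hs),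
        if_pos (Set.mem_compl fun h => hs (.inl h)), add_le_add_iff_left]
      exact stopExp_le_of_superharmonic hG h1 h2 hφ hsuper 1 w s
  | succ L ih =>
    intro w s
    by_cases hs : s ∈ U ∪ I
    · exact hboundary (L + 1) w s hs
    have hU : s ∉ U := fun h => hs (.inl h)
    simp only [Pi.add_apply]
    rw [safeW_succ, safeW_succ, stopExp, if_pos (Set.mem_compl hU), if_pos (Set.mem_compl hs),
      if_pos (Set.mem_compl hU), ← preSS_add]
    calc preSS G (safeW G σ₁ σ₂ Uᶜ L (w ++ [s]) +
          stopExp G σ₁ σ₂ Uᶜ (L + 1) (fun _ => φ) (w ++ [s])) s (σ₁ w s) (σ₂ w s)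
        ≤ preSS G (safeW G σ₁ σ₂ (U ∪ I)ᶜ L (w ++ [s]) + φ) s (σ₁ w s) (σ₂ w s) :=
          preSS_mono hG (h1 w s).1 (h2 w s).1 (ih (w ++ [s]))
      _ ≤ _ := by rw [preSS_add]; linarith [hsuper w s hU]

lemma prSafe_eq_zero_of_drop (hG : G.IsGame) (h1 : IsStrat1 G σ₁) (h2 : IsStrat2 G σ₂)
    (hφ : ∀ t, 0 ≤ φ t)
    (hdrop : ∀ w, ∀ s ∉ U, preSS G φ s (σ₁ w s) (σ₂ w s) + I.indicator 1 s ≤ φ s)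
    (hdecay : ∀ η > 0, ∃ L, ∀ w t, safeW G σ₁ σ₂ (U ∪ I)ᶜ L w t ≤ η) (s : S) :
    prSafe G σ₁ σ₂ Uᶜ s = 0 := by
  refine le_antisymm (le_of_forall_pos_le_add fun η hη => ?_) (prSafe_nonneg hG h1 h2 s)
  obtain ⟨L, hL⟩ := hdecay (η / 2) (half_pos hη)
  obtain ⟨m, hm⟩ := exists_lt_of_ciInf_lt (lt_add_of_pos_right
    (⨅ n, stopExp G σ₁ σ₂ Uᶜ n (fun _ => φ) [] s) (half_pos hη))
  have hlim := ciInf_le (f := fun n => stopExp G σ₁ σ₂ Uᶜ n (fun _ => φ) [] s)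
    ⟨0, by rintro _ ⟨n, rfl⟩; exact stopExp_nonneg hG h1 h2 (fun _ => hφ) n [] s⟩ (m + (L + 1))
  have hsplit := stopExp_mono (F := Uᶜ) hG h1 h2
    (safeW_add_stopExp_le_of_drop hG h1 h2 hφ hdrop L) m [] s
  rw [stopExp_add, stopExp_add, ← safeW_add, ← stopExp_comp] at hsplit
  dsimp only [Pi.add_apply] at hsplit hm hlim
  linarith [prSafe_le_safeW (F := Uᶜ) hG h1 h2 (m + L) s,
    stopExp_le_const (F := Uᶜ) hG h1 h2 (half_pos hη).le hL m [] s]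

lemma prSafe_eq_zero_of_gain (hG : G.IsGame) (h1 : IsStrat1 G σ₁) (h2 : IsStrat2 G σ₂)
    {v : S → ℝ} {ε : ℝ} (hv1 : ∀ t, v t ≤ 1) (hε : 0 < ε)
    (hgain : ∀ w, ∀ s ∉ U, v s + ε * I.indicator 1 s ≤ preSS G v s (σ₁ w s) (σ₂ w s))
    (hdecay : ∀ η > 0, ∃ L, ∀ w t, safeW G σ₁ σ₂ (U ∪ I)ᶜ L w t ≤ η) (s : S) :
    prSafe G σ₁ σ₂ Uᶜ s = 0 := by
  refine prSafe_eq_zero_of_drop hG h1 h2 (φ := ε⁻¹ • (1 - v))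
    (fun t => mul_nonneg (inv_nonneg.2 hε.le) (sub_nonneg.2 (hv1 t))) (fun w t ht => ?_) hdecay s
  have hind : I.indicator 1 t ≤ ε⁻¹ * (preSS G v t (σ₁ w t) (σ₂ w t) - v t) := by
    rw [le_inv_mul_iff₀ hε]
    linarith [hgain w t ht]
  rw [preSS_smul, preSS_sub, show preSS G 1 t (σ₁ w t) (σ₂ w t) = 1 from
    preSS_const hG (h1 w t) (h2 w t) 1]
  simp only [Pi.smul_apply, Pi.sub_apply, Pi.one_apply, smul_eq_mul]
  linarith [mul_sub ε⁻¹ (1 - preSS G v t (σ₁ w t) (σ₂ w t)) (1 - v t)]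

end Potential

end CGame

theorem improvement_step_preserves_proper_general
    {S M : Type} [Fintype S] [Fintype M]
    (G : CGame S M) (hG : G.IsGame) (T : Set S)
    (γ γ' : S → M → ℝ) (hγ : CGame.IsSel1 G γ) (hγ' : CGame.IsSel1 G γ')
    (hproper : CGame.Proper G T (CGame.ml γ))
    (v : S → ℝ) (hv : v = CGame.valReachUnder G (CGame.ml γ) T)
    (I : Set S)
    (hI : I = {s | s ∉ T ∪ CGame.W2 G T ∧ v s < CGame.pre1 G v s})
    (hagree : ∀ s ∉ I, γ' s = γ s)
    (himp : ∀ s ∈ I, CGame.pre1Sel G v s (γ' s) = CGame.pre1 G v s) :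
    CGame.Proper G T (CGame.ml γ') := by
  open CGame in
  have h1 := isStrat1_ml hγ
  have h1' := isStrat1_ml hγ'
  have hv0 : 0 ≤ v := by rw [hv]; exact fun t => valReachUnder_nonneg hG h1 t
  have hv1 : ∀ t, v t ≤ 1 := by rw [hv]; exact fun t => valReachUnder_le_one hG h1 t
  obtain ⟨ε, hε, hεI⟩ := exists_pos_forall_le_of_finite (p := (· ∈ I))
    (g := fun s => pre1 G v s - v s) fun s hs => by rw [hI] at hs; exact sub_pos.2 hs.2
  have hgain : ∀ s ∉ T ∪ W2 G T, ∀ y, IsDistOn (G.Γ₂ s) y →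
      v s + ε * I.indicator 1 s ≤ preSS G v s (γ' s) y := by
    intro s hs y hy
    by_cases hsI : s ∈ I
    · rw [Set.indicator_of_mem hsI, Pi.one_apply, mul_one]
      linarith [hεI s hsI, himp s hsI, pre1Sel_le_preSS hG hv0 (hγ' s).1 hy]
    · rw [Set.indicator_of_notMem hsI, mul_zero, add_zero, hagree s hsI, hv]
      exact valReachUnder_le_preSS hG hγ (fun h => hs (Or.inl h)) hy
  intro σ₂ h2 s
  rw [prReach_eq_one_sub_prSafe hG h1' h2, sub_eq_self]
  refine prSafe_eq_zero_of_gain hG h1' h2 hv1 hε (fun w t ht => hgain t ht _ (h2 w t))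
    (fun η hη => ?_) s
  obtain ⟨L, hL⟩ := hproper.exists_safeW_le hG hγ hη
  exact ⟨L, fun w t => (safeW_le_safeW_of_eqOn hG h1 h2
    (Set.compl_subset_compl.2 Set.subset_union_left) (fun _ t ht => hagree t (ht <| .inr ·))
    L w t).trans (hL σ₂ h2 w t)⟩

/-- **The strategy-improvement step preserves properness (reachability).**
Let `γ` be a proper player-1 selector with value `v = ⟨1⟩val^{ml γ}(Reach T)`, let
`I = {s ∉ T ∪ W₂ | Pre₁(v)(s) > v(s)}`, and let `γ'` agree with `γ` outside `I`
and satisfy `Pre_{1:γ'}(v)(s) = Pre₁(v)(s) > v(s)` on `I`. Then `γ'` is proper. -/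
theorem improvement_step_preserves_proper
    {S M : Type} [Fintype S] [DecidableEq S] [Fintype M] [DecidableEq M]
    (G : CGame S M) (hG : G.IsGame) (T : Set S)
    (habs : ∀ s ∈ T ∪ CGame.W2 G T, CGame.Absorbing G s)
    (γ γ' : S → M → ℝ) (hγ : CGame.IsSel1 G γ) (hγ' : CGame.IsSel1 G γ')
    (hproper : CGame.Proper G T (CGame.ml γ))
    (v : S → ℝ) (hv : v = CGame.valReachUnder G (CGame.ml γ) T)
    (I : Set S)
    (hI : I = {s | s ∉ T ∪ CGame.W2 G T ∧ v s < CGame.pre1 G v s})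
    (hagree : ∀ s ∉ I, γ' s = γ s)
    (himp : ∀ s ∈ I, CGame.pre1Sel G v s (γ' s) = CGame.pre1 G v s) :
    CGame.Proper G T (CGame.ml γ') :=
  improvement_step_preserves_proper_general G hG T γ γ' hγ hγ' hproper v hv I hI hagree himp
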